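/- Stiemke's Theorem: Let v_1, ..., v_m be vectors in R^n. Then exactly one of the following holds: (1) there exist strictly positive reals λ_1, ..., λ_m such that λ_1 v_1 + ... + λ_m v_m = 0; or (2) there exists a vector w in R^n such that w·v_i ≤ 0 for all i, with the inequality strict for at least one index i_0. -/
import Mathlib


/-- The dot product on `Fin n → ℝ`. -/
noncomputable def dotp {n : ℕ} (w u : Fin n → ℝ) : ℝ := ∑ i, w i * u i

lemma dotp_zero_right {n : ℕ} (w : Fin n → ℝ) : dotp w 0 = 0 := by simp [dotp]

lemma dotp_sub_smul_right {n : ℕ} (w x y : Fin n → ℝ) (a : ℝ) :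
    dotp w (x - a • y) = dotp w x - a * dotp w y := by
  simp only [dotp, Pi.sub_apply, Pi.smul_apply, smul_eq_mul, mul_sub, Finset.sum_sub_distrib,
    Finset.mul_sum]
  congr 1; apply Finset.sum_congr rfl; intro i _; ring

lemma dotp_sub_smul_left {n : ℕ} (u w x : Fin n → ℝ) (a : ℝ) :
    dotp (u - a • w) x = dotp u x - a * dotp w x := by
  simp only [dotp, Pi.sub_apply, Pi.smul_apply, smul_eq_mul, sub_mul, Finset.sum_sub_distrib,
    Finset.mul_sum]
  congr 1; apply Finset.sum_congr rfl; intro i _; ring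

lemma dotp_self_pos {n : ℕ} (b : Fin n → ℝ) (hb : b ≠ 0) : 0 < dotp b b := by
  obtain ⟨i, hi⟩ := Function.ne_iff.mp hb
  exact Finset.sum_pos' (fun j _ => mul_self_nonneg (b j))
    ⟨i, Finset.mem_univ i, mul_self_pos.mpr hi⟩

/-- Farkas' lemma for `ℝ^n`, by induction on the number of generators. -/
lemma farkas {n : ℕ} : ∀ {m : ℕ} (v : Fin m → (Fin n → ℝ)) (b : Fin n → ℝ),
    (∃ lam : Fin m → ℝ, (∀ i, 0 ≤ lam i) ∧ ∑ i, lam i • v i = b) ∨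
    (∃ w : Fin n → ℝ, (∀ i, dotp w (v i) ≤ 0) ∧ 0 < dotp w b) := by
  intro m
  induction m with
  | zero =>
    intro v b
    by_cases hb : b = 0
    · exact Or.inl ⟨fun _ => 0, fun i => le_refl 0, by simp [hb]⟩
    · exact Or.inr ⟨b, fun i => i.elim0, dotp_self_pos b hb⟩
  | succ m ih =>
    intro v b
    rcases ih (fun i => v i.castSucc) b with ⟨lam, hpos, hsum⟩ | ⟨w, hw, hwb⟩
    · refine Or.inl ⟨Fin.snoc lam 0, ?_, ?_⟩
      · intro i
        refine Fin.lastCases ?_ ?_ i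
        · simp
        · intro i; simpa using hpos i
      · rw [Fin.sum_univ_castSucc]
        simpa using hsum
    · by_cases hm : dotp w (v (Fin.last m)) ≤ 0
      · exact Or.inr ⟨w, fun i => Fin.lastCases hm hw i, hwb⟩
      · push_neg at hm
        have hd : dotp w (v (Fin.last m)) ≠ 0 := ne_of_gt hm
        rcases ih
            (fun i => v i.castSucc
              - (dotp w (v i.castSucc) / dotp w (v (Fin.last m))) • v (Fin.last m))
            (b - (dotp w b / dotp w (v (Fin.last m))) • v (Fin.last m))
          with ⟨μ, hμ, hsum⟩ | ⟨u, hu, hub⟩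
        · -- reconstruct the nonnegative combination
          set S : ℝ := ∑ i, μ i * dotp w (v i.castSucc) with hS
          set c : ℝ := (dotp w b - S) / dotp w (v (Fin.last m)) with hc
          have hSle : S ≤ 0 :=
            Finset.sum_nonpos fun i _ => mul_nonpos_of_nonneg_of_nonpos (hμ i) (hw i)
          have hcpos : 0 ≤ c := div_nonneg (by linarith) (le_of_lt hm)
          refine Or.inl ⟨Fin.snoc μ c, ?_, ?_⟩
          · intro i
            refine Fin.lastCases ?_ ?_ i
            · simpa using hcpos
            · intro i; simpa using hμ i
          · rw [Fin.sum_univ_castSucc]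
            simp only [Fin.snoc_castSucc, Fin.snoc_last]
            funext k
            have hk := congrFun hsum k
            simp only [Finset.sum_apply, Pi.add_apply, Pi.sub_apply, Pi.smul_apply,
              smul_eq_mul] at hk ⊢
            have hrw : ∀ i ∈ Finset.univ, μ i * (v i.castSucc k
                - dotp w (v i.castSucc) / dotp w (v (Fin.last m)) * v (Fin.last m) k)
                = μ i * v i.castSucc k
                  - (μ i * dotp w (v i.castSucc)) * (v (Fin.last m) k / dotp w (v (Fin.last m))) :=
              fun i _ => by ring
            rw [Finset.sum_congr rfl hrw, Finset.sum_sub_distrib, ← Finset.sum_mul, ← hS] at hk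
            rw [hc]
            linear_combination hk
        · -- new separating vector
          refine Or.inr ⟨u - (dotp u (v (Fin.last m)) / dotp w (v (Fin.last m))) • w, ?_, ?_⟩
          · intro i
            refine Fin.lastCases ?_ ?_ i
            · rw [dotp_sub_smul_left, div_mul_cancel₀ _ hd, sub_self]
            · intro i
              have h := hu i
              rw [dotp_sub_smul_right] at h
              rw [dotp_sub_smul_left]
              have e : dotp u (v i.castSucc)
                  - dotp u (v (Fin.last m)) / dotp w (v (Fin.last m)) * dotp w (v i.castSucc)
                  = dotp u (v i.castSucc)
                  - dotp w (v i.castSucc) / dotp w (v (Fin.last m)) * dotp u (v (Fin.last m)) := by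
                ring
              rw [e]; exact h
          · rw [dotp_sub_smul_right] at hub
            rw [dotp_sub_smul_left]
            have e : dotp u b - dotp u (v (Fin.last m)) / dotp w (v (Fin.last m)) * dotp w b
                = dotp u b - dotp w b / dotp w (v (Fin.last m)) * dotp u (v (Fin.last m)) := by
              ring
            rw [e]; exact hub

lemma dotp_smul_right {n : ℕ} (w u : Fin n → ℝ) (a : ℝ) :
    dotp w (a • u) = a * dotp w u := by
  simp only [dotp, Pi.smul_apply, smul_eq_mul, Finset.mul_sum]
  apply Finset.sum_congr rfl; intro i _; ring

lemma dotp_sum_right {n m : ℕ} (w : Fin n → ℝ) (f : Fin m → (Fin n → ℝ)) :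
    dotp w (∑ j, f j) = ∑ j, dotp w (f j) := by
  simp only [dotp, Finset.sum_apply, Finset.mul_sum]
  rw [Finset.sum_comm]

lemma dotp_snoc_right {n : ℕ} (W : Fin (n + 1) → ℝ) (x : Fin n → ℝ) (s : ℝ) :
    dotp W (Fin.snoc x s) = dotp (fun k => W k.castSucc) x + W (Fin.last n) * s := by
  simp [dotp, Fin.sum_univ_castSucc]

/-- If both alternatives of Stiemke's theorem held, we would get a contradiction. -/
lemma stiemke_not_both {n m : ℕ} (v : Fin m → (Fin n → ℝ))
    (h1 : ∃ lam : Fin m → ℝ, (∀ i, 0 < lam i) ∧ ∑ i, lam i • v i = 0)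
    (h2 : ∃ w : Fin n → ℝ, (∀ i, dotp w (v i) ≤ 0) ∧ ∃ i₀, dotp w (v i₀) < 0) : False := by
  obtain ⟨lam, hpos, hsum⟩ := h1
  obtain ⟨w, hw, i₀, hi₀⟩ := h2
  have h0 : dotp w (∑ i, lam i • v i) = 0 := by rw [hsum, dotp_zero_right]
  rw [dotp_sum_right] at h0
  simp only [dotp_smul_right] at h0
  have hlt : ∑ i, lam i * dotp w (v i) < ∑ _i : Fin m, (0 : ℝ) := by
    apply Finset.sum_lt_sum
    · intro i _
      exact mul_nonpos_of_nonneg_of_nonpos (le_of_lt (hpos i)) (hw i)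
    · exact ⟨i₀, Finset.mem_univ i₀, mul_neg_of_pos_of_neg (hpos i₀) hi₀⟩
  rw [Finset.sum_const_zero] at hlt
  linarith

/-- Stiemke's Theorem: for vectors `v 1, ..., v m` in `ℝ^n`, exactly one of the
following holds: (1) there is a strictly positive combination of the `v i` equal to `0`;
or (2) there is `w` with `w · v i ≤ 0` for all `i`, strict for at least one `i₀`. -/
theorem stiemke {n m : ℕ} (v : Fin m → (Fin n → ℝ)) :
    Xor'
      (∃ lam : Fin m → ℝ, (∀ i, 0 < lam i) ∧ ∑ i, lam i • v i = 0)
      (∃ w : Fin n → ℝ, (∀ i, dotp w (v i) ≤ 0) ∧ ∃ i₀, dotp w (v i₀) < 0) := by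
  by_cases h2 : ∃ w : Fin n → ℝ, (∀ i, dotp w (v i) ≤ 0) ∧ ∃ i₀, dotp w (v i₀) < 0
  · exact Or.inr ⟨h2, fun h1 => stiemke_not_both v h1 h2⟩
  · refine Or.inl ⟨?_, h2⟩
    -- for each `j`, use Farkas in an augmented space to get a nonneg combination
    -- with `j`-th coefficient at least 1
    have key : ∀ j : Fin m, ∃ lam : Fin m → ℝ,
        (∀ i, 0 ≤ lam i) ∧ 1 ≤ lam j ∧ ∑ i, lam i • v i = 0 := by
      intro j
      rcases farkas
          (Fin.snoc (fun i : Fin m => (Fin.snoc (v i) (if i = j then 1 else 0) : Fin (n+1) → ℝ))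
            (Fin.snoc 0 (-1)))
          (Fin.snoc 0 1)
        with ⟨μ, hμ, hsum⟩ | ⟨W, hW, hWb⟩
      · rw [Fin.sum_univ_castSucc] at hsum
        simp only [Fin.snoc_castSucc, Fin.snoc_last] at hsum
        refine ⟨fun i => μ i.castSucc, fun i => hμ i.castSucc, ?_, ?_⟩
        · have hk := congrFun hsum (Fin.last n)
          simp only [Finset.sum_apply, Pi.add_apply, Pi.smul_apply, smul_eq_mul,
            Fin.snoc_last, mul_ite, mul_one, mul_zero, Finset.sum_ite_eq',
            Finset.mem_univ, if_true] at hk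
          have := hμ (Fin.last m)
          linarith
        · funext k
          have hk := congrFun hsum k.castSucc
          simp only [Finset.sum_apply, Pi.add_apply, Pi.smul_apply, smul_eq_mul,
            Fin.snoc_castSucc, Pi.zero_apply, mul_zero, add_zero] at hk
          simpa [Finset.sum_apply] using hk
      · exfalso
        apply h2
        have ht : 0 < W (Fin.last n) := by
          rw [dotp_snoc_right, dotp_zero_right, zero_add, mul_one] at hWb
          exact hWb
        refine ⟨fun k => W k.castSucc, ?_, ⟨j, ?_⟩⟩
        · intro i
          have h := hW i.castSucc
          rw [Fin.snoc_castSucc, dotp_snoc_right] at h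
          by_cases hij : i = j
          · subst hij; simp at h; linarith
          · simp only [if_neg hij, mul_zero, add_zero] at h; linarith
        · have h := hW j.castSucc
          rw [Fin.snoc_castSucc, dotp_snoc_right] at h
          simp at h
          linarith
    choose L hL0 hL1 hLs using key
    refine ⟨fun i => ∑ j, L j i, ?_, ?_⟩
    · intro i
      have : (1 : ℝ) ≤ ∑ j, L j i :=
        le_trans (hL1 i) (Finset.single_le_sum (f := fun j => L j i)
          (fun j _ => hL0 j i) (Finset.mem_univ i))
      linarith
    · have : ∑ i, (∑ j, L j i) • v i = ∑ j, ∑ i, L j i • v i := by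
        rw [Finset.sum_comm]
        apply Finset.sum_congr rfl
        intro i _
        rw [Finset.sum_smul]
      rw [this]
      simp [hLs]
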